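/- Let d be a natural number and let A ∈ R^{n×n} have full left row rank with degD A_{ij} ≤ d for all i, j. Let H ∈ R^{n×n} be a Hermite form of A, i.e. U·A = H for some unimodular U ∈ R^{n×n} with H in Hermite form. Then: (a) the sum of the degrees of the diagonal entries of H is at most n·d, i.e. Σ_{i=1}^n degD H_{ii} ≤ n·d; and (b) for every row i, the sum of degD H_{ij} over the nonzero entries H_{ij} in row i is at most n·d. -/

import Mathlib

/-!
Let `F` be the skew field of elements of degree `≤ 0` and `g` an element of least positive
degree `e` (if there is none, all diagonal degrees are `0`). Right division by `g` shows that every element of degree `< e s` is a left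
`F`-combination of `1, g, …, g^(s-1)`, and these powers are `F`-linearly independent.
Put `t_j = ⌈deg H_jj / e⌉` and `N = ∑ t_j`. The map `(w, b) ↦ w + b A`, with `w_j` in the span
of `g^i, i < t_j` and `b_j` in the span of `g^i, i ≤ N`, is injective: `w = -(b V) H` has every
entry of degree below the diagonal degree of the triangular `H`, which forces `b V = 0`, so
`w = 0` and `b = 0` by full rank. Its image lies in the vectors with entries of degree
`< e (N + ⌊d/e⌋ + 1)`, so counting `F`-dimensions gives `∑ t_j + n (N + 1) ≤ n (N + ⌊d/e⌋ + 1)`,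
whence `∑ deg H_jj ≤ e ∑ t_j ≤ n d`. Bound (b) follows because every nonzero `H_ij` has degree
at most `deg H_jj`.
-/

theorem WithBot.nat_eq_zero_of_add_self {a : WithBot ℕ} (h : a + a = 0) : a = 0 := by
  induction a using WithBot.recBotCoe with
  | bot => simp at h
  | coe m => norm_cast at h ⊢; simp_all

def Matrix.addVecMulₗ {R S ι : Type*} [Ring R] [Fintype ι] [Semiring S] [Module S R]
    [IsScalarTower S R R] (A : Matrix ι ι R) (W : ι → Submodule S R) (B : Submodule S R) :
    ((j : ι) → W j) × (ι → B) →ₗ[S] ι → R where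
  toFun p := (fun j => (p.1 j : R)) + Matrix.vecMul (fun j => (p.2 j : R)) A
  map_add' p q := by
    change (_ + _) + Matrix.vecMul (_ + _) A = _
    rw [Matrix.add_vecMul]
    abel
  map_smul' c p := by
    change c • _ + Matrix.vecMul (c • _) A = c • (_ + _)
    rw [Matrix.smul_vecMul, smul_add]

theorem exists_min_pos_value {α : Type*} (f : α → WithBot ℕ) (h : ∃ a, 0 < f a) :
    ∃ a, ∃ e : ℕ, 0 < e ∧ f a = e ∧ ∀ b, f b < e → f b ≤ 0 := by
  classical
  have hex : ∃ k : ℕ, 0 < k ∧ ∃ a, f a = k := by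
    obtain ⟨a, ha⟩ := h
    induction hfa : f a using WithBot.recBotCoe with
    | bot => simp [hfa] at ha
    | coe k =>
      rw [← Nat.cast_withBot] at hfa
      exact ⟨k, by exact_mod_cast hfa ▸ ha, a, hfa⟩
  obtain ⟨he, a, ha⟩ := Nat.find_spec hex
  refine ⟨a, Nat.find hex, he, ha, fun b hb => ?_⟩
  induction hfb : f b using WithBot.recBotCoe with
  | bot => exact bot_le
  | coe k =>
    rw [← Nat.cast_withBot] at hfb ⊢
    rw [hfb] at hb
    have hk : ¬(0 < k ∧ ∃ a, f a = k) := Nat.find_min hex (by exact_mod_cast hb)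
    exact_mod_cast Nat.le_zero.2 (by_contra fun hk0 => hk ⟨Nat.pos_of_ne_zero hk0, b, hfb⟩)

structure IsDegreeFunction {R : Type*} [Ring R] (deg : R → WithBot ℕ) : Prop where
  eq_bot_iff : ∀ r, deg r = ⊥ ↔ r = 0
  map_mul : ∀ r s, deg (r * s) = deg r + deg s
  map_add_le : ∀ r s, deg (r + s) ≤ max (deg r) (deg s)

namespace IsDegreeFunction

open Matrix

variable {R : Type*} [Ring R] {deg : R → WithBot ℕ} (hD : IsDegreeFunction deg)
include hD

theorem map_zero : deg 0 = ⊥ := (hD.eq_bot_iff 0).2 rfl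

theorem ne_bot {r : R} (hr : r ≠ 0) : deg r ≠ ⊥ := fun h => hr ((hD.eq_bot_iff r).1 h)

theorem nonneg {r : R} (hr : r ≠ 0) : 0 ≤ deg r := by
  obtain ⟨m, hm⟩ := WithBot.ne_bot_iff_exists.1 (hD.ne_bot hr)
  rw [← hm]
  exact WithBot.coe_le_coe.2 m.zero_le

theorem le_map_mul_left {r : R} (hr : r ≠ 0) (s : R) : deg s ≤ deg (r * s) := by
  rw [hD.map_mul]
  exact le_add_of_nonneg_left (hD.nonneg hr)

theorem map_one [Nontrivial R] : deg 1 = 0 := by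
  refine (WithBot.add_left_cancel (hD.ne_bot one_ne_zero) ?_).symm
  rw [← hD.map_mul, one_mul, add_zero]

theorem map_neg [Nontrivial R] (r : R) : deg (-r) = deg r := by
  have h : deg (-1) = 0 := WithBot.nat_eq_zero_of_add_self <| by
    rw [← hD.map_mul, neg_mul_neg, one_mul, hD.map_one]
  rw [← neg_one_mul, hD.map_mul, h, zero_add]

theorem map_pow [Nontrivial R] (r : R) (k : ℕ) : deg (r ^ k) = k • deg r := by
  induction k with
  | zero => simp [hD.map_one]
  | succ k ih => rw [pow_succ, hD.map_mul, ih, succ_nsmul]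

theorem map_add_of_lt [Nontrivial R] {r s : R} (h : deg s < deg r) : deg (r + s) = deg r := by
  refine le_antisymm ((hD.map_add_le r s).trans (max_le le_rfl h.le)) ?_
  have key := hD.map_add_le (r + s) (-s)
  rw [add_neg_cancel_right, hD.map_neg] at key
  rcases le_max_iff.1 key with h' | h'
  · exact h'
  · exact absurd h' h.not_ge

theorem map_sum_lt {ι : Type*} (s : Finset ι) (f : ι → R) {b : WithBot ℕ} (hb : ⊥ < b)
    (h : ∀ i ∈ s, deg (f i) < b) : deg (∑ i ∈ s, f i) < b := by
  classical
  induction s using Finset.induction_on with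
  | empty => simpa [hD.map_zero]
  | insert a s ha ih =>
    rw [Finset.sum_insert ha]
    exact (hD.map_add_le _ _).trans_lt <| max_lt (h a (Finset.mem_insert_self a s))
      (ih fun i hi => h i (Finset.mem_insert_of_mem hi))

theorem eq_zero_of_map_vecMul_lt {ι : Type*} [Fintype ι] [LinearOrder ι] [WellFoundedLT ι]
    {H : Matrix ι ι R} (hH : ∀ i j, j < i → H i j = 0) {c : ι → R}
    (hc : ∀ j, deg ((c ᵥ* H) j) < deg (H j j)) : c = 0 := by
  classical
  suffices ∀ j, c j = 0 from funext this
  intro j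
  induction j using WellFoundedLT.induction with
  | _ j ih =>
  have hcol : (c ᵥ* H) j = c j * H j j := by
    simp only [vecMul, dotProduct]
    refine Finset.sum_eq_single j (fun k _ hkj => ?_) (by simp)
    rcases lt_or_gt_of_ne hkj with hk | hk
    · rw [ih k hk, zero_mul]
    · rw [hH k j hk, mul_zero]
  by_contra hcj
  exact (hc j).not_ge (hcol ▸ hD.le_map_mul_left hcj _)

theorem eq_zero_of_add_vecMul_eq_zero {ι : Type*} [Fintype ι] [LinearOrder ι] [WellFoundedLT ι]
    {A V H : Matrix ι ι R} (hrank : ∀ b : ι → R, b ᵥ* A = 0 → b = 0) (hA : A = V * H)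
    (hH : ∀ i j, j < i → H i j = 0) {w b : ι → R} (hw : ∀ j, deg (w j) < deg (H j j))
    (hwb : w + b ᵥ* A = 0) : w = 0 ∧ b = 0 := by
  have hw' : w = -(b ᵥ* V) ᵥ* H := by
    rw [neg_vecMul, vecMul_vecMul, ← hA]
    exact eq_neg_of_add_eq_zero_left hwb
  have hw0 : w = 0 := by
    rw [hw', hD.eq_zero_of_map_vecMul_lt hH (c := -(b ᵥ* V)) (hw' ▸ hw), zero_vecMul]
  exact ⟨hw0, hrank b (by simpa [hw0] using hwb)⟩

theorem sum_map_row_le_sum_map_diag {ι : Type*} [Fintype ι] [LinearOrder ι]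
    {H : Matrix ι ι R} (hH : ∀ i j, j < i → H i j = 0) (hdiag : ∀ i, H i i ≠ 0)
    (hdeg : ∀ i j, i < j → deg (H i j) < deg (H j j)) (i : ι) (s : Finset ι)
    (hs : ∀ j ∈ s, H i j ≠ 0) : ∑ j ∈ s, deg (H i j) ≤ ∑ j, deg (H j j) :=
  calc ∑ j ∈ s, deg (H i j) ≤ ∑ j ∈ s, deg (H j j) := by
        refine Finset.sum_le_sum fun j hj => ?_
        rcases lt_trichotomy i j with hij | rfl | hji
        · exact (hdeg i j hij).le
        · exact le_rfl
        · exact absurd (hH i j hji) (hs j hj)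
    _ ≤ ∑ j, deg (H j j) :=
        Finset.sum_le_sum_of_subset_of_nonneg s.subset_univ fun j _ _ => hD.nonneg (hdiag j)

theorem map_vecMul_lt {ι : Type*} [Fintype ι] {A : Matrix ι ι R} {d : ℕ}
    (hAd : ∀ i j, deg (A i j) ≤ d) {b : ι → R} {m : ℕ} (hb : ∀ j, deg (b j) < m) (k : ι) :
    deg ((b ᵥ* A) k) < ↑(m + d) := by
  refine hD.map_sum_lt _ _ (WithBot.bot_lt_coe _) fun j _ => ?_
  calc deg (b j * A j k) ≤ deg (b j) + d := by
        rw [hD.map_mul]; gcongr; exact hAd j k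
    _ < ↑m + d := (WithBot.add_lt_add_iff_right (WithBot.natCast_ne_bot d)).2 (hb j)
    _ = ↑(m + d) := by norm_cast

variable [Nontrivial R]

def coeffSubring : Subring R where
  carrier := {r | deg r ≤ 0}
  zero_mem' := by simp [hD.map_zero]
  one_mem' := hD.map_one.le
  add_mem' {a b} ha hb := (hD.map_add_le a b).trans (max_le ha hb)
  mul_mem' {a b} ha hb := by
    simp only [Set.mem_ofPred_eq, hD.map_mul] at *
    simpa using add_le_add ha hb
  neg_mem' {a} ha := (hD.map_neg a).trans_le ha

theorem map_smul_le (c : hD.coeffSubring) (r : R) : deg (c • r) ≤ deg r := by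
  show deg ((c : R) * r) ≤ deg r
  rw [hD.map_mul]
  simpa using add_le_add_left c.2 (deg r)

theorem map_coe_eq_zero {c : hD.coeffSubring} (hc : c ≠ 0) : deg (c : R) = 0 :=
  le_antisymm c.2 (hD.nonneg fun h => hc (Subtype.ext h))

noncomputable abbrev coeffDivisionRing (hunit : ∀ r : R, deg r = 0 → IsUnit r) :
    DivisionRing hD.coeffSubring :=
  DivisionRing.ofIsUnitOrEqZero fun a => by
    refine or_iff_not_imp_right.2 fun ha => ?_
    obtain ⟨u, hu⟩ := hunit _ (hD.map_coe_eq_zero ha)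
    have hinv : deg (↑u⁻¹ : R) ≤ 0 := by
      have h := hD.map_mul u ↑u⁻¹
      rw [Units.mul_inv, hD.map_one, hu, hD.map_coe_eq_zero ha, zero_add] at h
      exact h.ge
    refine ⟨⟨a, ⟨_, hinv⟩, ?_, ?_⟩, rfl⟩ <;> ext
    · simp [← hu]
    · simp [← hu]

def powSpan (g : R) (s : ℕ) : Submodule hD.coeffSubring R :=
  Submodule.span _ (Set.range fun i : Fin s => g ^ (i : ℕ))

instance (g : R) (s : ℕ) : Module.Finite hD.coeffSubring (hD.powSpan g s) :=
  Module.Finite.span_of_finite _ (Set.finite_range _)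

theorem map_lt_of_mem_span {S : Set R} {b : WithBot ℕ} (hb : ⊥ < b) (hS : ∀ x ∈ S, deg x < b)
    {r : R} (hr : r ∈ Submodule.span hD.coeffSubring S) : deg r < b := by
  induction hr using Submodule.span_induction with
  | mem x hx => exact hS x hx
  | zero => rwa [hD.map_zero]
  | add x y _ _ hx hy => exact (hD.map_add_le x y).trans_lt (max_lt hx hy)
  | smul c x _ hx => exact (hD.map_smul_le c x).trans_lt hx

variable {g : R} {e : ℕ} (hg : deg g = e)
include hg

theorem map_pow_eq (k : ℕ) : deg (g ^ k) = ↑(k * e) := by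
  rw [hD.map_pow, hg]; norm_cast

theorem map_lt_of_mem_powSpan {s b : ℕ} (hsb : ∀ i < s, i * e < b) {r : R}
    (hr : r ∈ hD.powSpan g s) : deg r < b := by
  refine hD.map_lt_of_mem_span (WithBot.bot_lt_coe b) ?_ hr
  rintro _ ⟨i, rfl⟩
  rw [hD.map_pow_eq hg]
  exact WithBot.coe_lt_coe.2 (hsb i i.2)

theorem linearIndependent_pow (he : 0 < e) :
    LinearIndependent hD.coeffSubring fun i : ℕ => g ^ i := by
  classical
  rw [linearIndependent_iff']
  intro s c hsum
  induction s using Finset.induction_on_max with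
  | empty => simp
  | insert a s hlt ih =>
    rw [Finset.sum_insert fun h => (hlt a h).false] at hsum
    have hrest : deg (∑ i ∈ s, c i • g ^ i) < ↑(a * e) := by
      refine hD.map_sum_lt s _ (WithBot.bot_lt_coe _) fun i hi => ?_
      refine (hD.map_smul_le _ _).trans_lt ?_
      rw [hD.map_pow_eq hg]
      exact WithBot.coe_lt_coe.2 (Nat.mul_lt_mul_of_pos_right (hlt i hi) he)
    have hca : c a = 0 := by
      by_contra hca
      have hlead : deg (c a • g ^ a) = ↑(a * e) := by
        show deg ((c a : R) * g ^ a) = _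
        rw [hD.map_mul, hD.map_coe_eq_zero hca, hD.map_pow_eq hg, zero_add]
      rw [← hlead] at hrest
      have := hD.map_add_of_lt hrest
      rw [hsum, hD.map_zero, hlead] at this
      exact WithBot.bot_ne_coe this
    rw [hca, zero_smul, zero_add] at hsum
    intro i hi
    rcases Finset.mem_insert.1 hi with rfl | hi
    · exact hca
    · exact ih hsum i hi

theorem finrank_powSpan (hunit : ∀ r : R, deg r = 0 → IsUnit r) (he : 0 < e) (s : ℕ) :
    Module.finrank hD.coeffSubring (hD.powSpan g s) = s := by
  let _ := hD.coeffDivisionRing hunit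
  exact (finrank_span_eq_card ((hD.linearIndependent_pow hg he).comp _ Fin.val_injective)).trans
    (Fintype.card_fin s)

theorem mem_powSpan_of_map_lt
    (hdivision : ∀ f g : R, g ≠ 0 → ∃ q rem : R, f = q * g + rem ∧ deg rem < deg g)
    (hgap : ∀ r : R, deg r < e → deg r ≤ 0) (s : ℕ) {r : R} (hr : deg r < ↑(e * s)) :
    r ∈ hD.powSpan g s := by
  induction s generalizing r with
  | zero =>
    rw [(hD.eq_bot_iff r).1 (by simpa using hr)]
    exact zero_mem _
  | succ s ih =>
    obtain ⟨q, rem, rfl, hrem⟩ := hdivision r g (fun h => by simp [h, hD.map_zero] at hg)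
    rw [hg] at hrem
    have hq : deg q < ↑(e * s) := by
      rw [mul_add_one] at hr
      have hqg : deg (q * g) < ↑(e * s + e) := by
        have h := hD.map_add_le (q * g + rem) (-rem)
        rw [add_neg_cancel_right, hD.map_neg] at h
        exact h.trans_lt (max_lt hr (hrem.trans_le (by exact_mod_cast Nat.le_add_left e _)))
      rwa [hD.map_mul, hg, Nat.cast_add, WithBot.add_lt_add_iff_right (WithBot.natCast_ne_bot e)]
        at hqg
    have hqg : q * g ∈ hD.powSpan g (s + 1) := by
      have h := Submodule.mem_map_of_mem (f := LinearMap.mulRight hD.coeffSubring g) (ih hq)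
      rw [powSpan, Submodule.map_span] at h
      refine Submodule.span_mono ?_ h
      rintro _ ⟨_, ⟨i, rfl⟩, rfl⟩
      exact ⟨i.succ, by simp [pow_succ]⟩
    refine add_mem hqg ?_
    have : rem = (⟨rem, hgap rem hrem⟩ : hD.coeffSubring) • g ^ ((0 : Fin (s+1)) : ℕ) := by
      simp [Subring.smul_def]
    rw [this]
    exact Submodule.smul_mem _ _ (Submodule.subset_span ⟨0, rfl⟩)

theorem sum_le_card_mul_div (hunit : ∀ r : R, deg r = 0 → IsUnit r)
    (hdivision : ∀ f g : R, g ≠ 0 → ∃ q rem : R, f = q * g + rem ∧ deg rem < deg g)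
    (he : 0 < e) (hgap : ∀ r : R, deg r < e → deg r ≤ 0)
    {ι : Type*} [Fintype ι] [LinearOrder ι] [WellFoundedLT ι] {A V H : Matrix ι ι R} {d : ℕ}
    (hrank : ∀ b : ι → R, b ᵥ* A = 0 → b = 0) (hAd : ∀ i j, deg (A i j) ≤ d) (hA : A = V * H)
    (hH : ∀ i j, j < i → H i j = 0) (h t : ι → ℕ) (hh : ∀ j, deg (H j j) = h j)
    (ht : ∀ j, ∀ i < t j, i * e < h j) :
    ∑ j, t j ≤ Fintype.card ι * (d / e) := by
  let _ := hD.coeffDivisionRing hunit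
  set N := ∑ j, t j
  set M := N + d / e + 1
  let Φ₀ := A.addVecMulₗ (fun j => hD.powSpan g (t j)) (hD.powSpan g (N + 1))
  have hmem : ∀ p k, Φ₀ p k ∈ hD.powSpan g M := by
    intro p k
    refine hD.mem_powSpan_of_map_lt hg hdivision hgap M
      ((hD.map_add_le _ _).trans_lt (max_lt ?_ ?_))
    · have htM : t k < M :=
        Nat.lt_succ_of_le ((Finset.single_le_sum (fun _ _ => Nat.zero_le _)
          (Finset.mem_univ k)).trans (Nat.le_add_right _ _))
      refine hD.map_lt_of_mem_powSpan hg (fun i hi => ?_) (p.1 k).2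
      rw [mul_comm e]
      exact Nat.mul_lt_mul_of_pos_right (hi.trans htM) he
    · have hde : N * e + 1 + d ≤ e * M := by
        have := Nat.lt_mul_div_succ d he
        simp only [M, mul_add, mul_one, mul_comm e N] at this ⊢
        omega
      refine (hD.map_vecMul_lt hAd (fun j => ?_) k).trans_le (by exact_mod_cast hde)
      exact hD.map_lt_of_mem_powSpan hg (fun i hi => Nat.lt_succ_of_le
        (Nat.mul_le_mul_right e (Nat.le_of_lt_succ hi))) (p.2 j).2
  let Φ : _ →ₗ[hD.coeffSubring] ι → hD.powSpan g M :=
    LinearMap.pi fun k => (LinearMap.proj k ∘ₗ Φ₀).codRestrict _ (hmem · k)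
  have hΦ : Function.Injective Φ := by
    rw [← LinearMap.ker_eq_bot, LinearMap.ker_eq_bot']
    intro p hp
    have hw : ∀ j, deg (p.1 j : R) < deg (H j j) := fun j => by
      rw [hh]; exact hD.map_lt_of_mem_powSpan hg (ht j) (p.1 j).2
    obtain ⟨hw0, hb0⟩ := hD.eq_zero_of_add_vecMul_eq_zero hrank hA hH hw
      (funext fun k => congrArg Subtype.val (congrFun hp k))
    exact Prod.ext (funext fun j => Subtype.ext (congrFun hw0 j))
      (funext fun j => Subtype.ext (congrFun hb0 j))
  have hdim := LinearMap.finrank_le_finrank_of_injective hΦ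
  simp only [Module.finrank_prod, Module.finrank_pi_fintype, hD.finrank_powSpan hg hunit he,
    Finset.sum_const, Finset.card_univ, smul_eq_mul] at hdim
  have : N + Fintype.card ι * (N + 1) ≤ Fintype.card ι * (N + d / e + 1) := hdim
  nlinarith

theorem sum_map_diag_le (hunit : ∀ r : R, deg r = 0 → IsUnit r)
    (hdivision : ∀ f g : R, g ≠ 0 → ∃ q rem : R, f = q * g + rem ∧ deg rem < deg g)
    (he : 0 < e) (hgap : ∀ r : R, deg r < e → deg r ≤ 0)
    {ι : Type*} [Fintype ι] [LinearOrder ι] [WellFoundedLT ι] {A V H : Matrix ι ι R} {d : ℕ}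
    (hrank : ∀ b : ι → R, b ᵥ* A = 0 → b = 0) (hAd : ∀ i j, deg (A i j) ≤ d) (hA : A = V * H)
    (hH : ∀ i j, j < i → H i j = 0) (hdiag : ∀ i, H i i ≠ 0) :
    ∑ i, deg (H i i) ≤ ↑(Fintype.card ι * d) := by
  choose h hh using fun i => WithBot.ne_bot_iff_exists.1 (hD.ne_bot (hdiag i))
  have hcount := hD.sum_le_card_mul_div hg hunit hdivision he hgap hrank hAd hA hH h
    (fun j => h j ⌈/⌉ e) (fun j => (hh j).symm) fun j i hi =>
      lt_of_not_ge fun hle => hi.not_ge ((ceilDiv_le_iff_le_mul he).2 (by rwa [mul_comm]))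
  have hsum : ∑ i, h i ≤ Fintype.card ι * d :=
    calc ∑ i, h i ≤ ∑ i, e * (h i ⌈/⌉ e) := Finset.sum_le_sum fun i _ => le_smul_ceilDiv he
      _ = e * ∑ i, h i ⌈/⌉ e := (Finset.mul_sum _ _ _).symm
      _ ≤ e * (Fintype.card ι * (d / e)) := Nat.mul_le_mul_left e hcount
      _ ≤ Fintype.card ι * d := by
        rw [mul_left_comm]; exact Nat.mul_le_mul_left _ (Nat.mul_div_le d e)
  simp only [← hh, ← Nat.cast_withBot]
  exact_mod_cast hsum

end IsDegreeFunction

open Classical in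
theorem stmt9_general
    {R : Type*} [Ring R] [Nontrivial R]
    (degD : R → WithBot ℕ)
    (hbot : ∀ r : R, degD r = ⊥ ↔ r = 0)
    (hmul : ∀ r s : R, degD (r * s) = degD r + degD s)
    (hadd : ∀ r s : R, degD (r + s) ≤ max (degD r) (degD s))
    (hunit : ∀ r : R, degD r = 0 → IsUnit r)
    (hdivision : ∀ f g : R, g ≠ 0 → ∃ q rem : R, f = q * g + rem ∧ degD rem < degD g)
    {n : ℕ} (d : ℕ) (A U H : Matrix (Fin n) (Fin n) R)
    (hrank : ∀ b : Fin n → R, Matrix.vecMul b A = 0 → b = 0)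
    (hAd : ∀ i j : Fin n, degD (A i j) ≤ ((d : ℕ) : WithBot ℕ))
    (hUuni : ∃ V : Matrix (Fin n) (Fin n) R, U * V = 1 ∧ V * U = 1)
    (hHut : ∀ i j : Fin n, j < i → H i j = 0)
    (hHdiag : ∀ i : Fin n, H i i ≠ 0)
    (hHdeg : ∀ i j : Fin n, i < j → degD (H i j) < degD (H j j))
    (hUA : U * A = H) :
    (∑ i : Fin n, degD (H i i)) ≤ ((n * d : ℕ) : WithBot ℕ) ∧
    (∀ i : Fin n,
      (∑ j ∈ Finset.univ.filter (fun j : Fin n => H i j ≠ 0), degD (H i j)) ≤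
        ((n * d : ℕ) : WithBot ℕ)) := by
  have hD : IsDegreeFunction degD := ⟨hbot, hmul, hadd⟩
  obtain ⟨V, -, hVU⟩ := hUuni
  have hA : A = V * H := by rw [← hUA, ← Matrix.mul_assoc, hVU, Matrix.one_mul]
  have hdiag : ∑ i, degD (H i i) ≤ ((n * d : ℕ) : WithBot ℕ) := by
    by_cases hpos : ∃ r : R, 0 < degD r
    · obtain ⟨g, e, he, hg, hgap⟩ := exists_min_pos_value degD hpos
      simpa using hD.sum_map_diag_le hg hunit hdivision he hgap hrank hAd hA hHut hHdiag
    · push Not at hpos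
      exact (Finset.sum_nonpos fun i _ => hpos _).trans (by exact_mod_cast Nat.zero_le _)
  exact ⟨hdiag, fun i => (hD.sum_map_row_le_sum_map_diag hHut hHdiag hHdeg i _
    fun j hj => (Finset.mem_filter.1 hj).2).trans hdiag⟩

open Classical in
/-- Degree bounds on the Hermite form: if `A ∈ R^{n×n}`
has full left row rank with all entries of degree at most `d`, and
`H = U·A` is a Hermite form of `A` (`U` unimodular), then (a) the sum of the
degrees of the diagonal entries of `H` is at most `n·d`, and (b) in every
row of `H` the sum of the degrees of the nonzero entries is at most `n·d`. -/
theorem stmt9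
    {R : Type*} [Ring R] [Nontrivial R] [NoZeroDivisors R]
    (degD : R → WithBot ℕ)
    (hbot : ∀ r : R, degD r = ⊥ ↔ r = 0)
    (hmul : ∀ r s : R, degD (r * s) = degD r + degD s)
    (hadd : ∀ r s : R, degD (r + s) ≤ max (degD r) (degD s))
    (hunit : ∀ r : R, degD r = 0 → IsUnit r)
    (hdivision : ∀ f g : R, g ≠ 0 → ∃ q rem : R, f = q * g + rem ∧ degD rem < degD g)
    {n : ℕ} (d : ℕ) (A U H : Matrix (Fin n) (Fin n) R)
    (hrank : ∀ b : Fin n → R, Matrix.vecMul b A = 0 → b = 0)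
    (hAd : ∀ i j : Fin n, degD (A i j) ≤ ((d : ℕ) : WithBot ℕ))
    (hUuni : ∃ V : Matrix (Fin n) (Fin n) R, U * V = 1 ∧ V * U = 1)
    (hHut : ∀ i j : Fin n, j < i → H i j = 0)
    (hHdiag : ∀ i : Fin n, H i i ≠ 0)
    (hHdeg : ∀ i j : Fin n, i < j → degD (H i j) < degD (H j j))
    (hUA : U * A = H) :
    (∑ i : Fin n, degD (H i i)) ≤ ((n * d : ℕ) : WithBot ℕ) ∧
    (∀ i : Fin n,
      (∑ j ∈ Finset.univ.filter (fun j : Fin n => H i j ≠ 0), degD (H i j)) ≤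
        ((n * d : ℕ) : WithBot ℕ)) :=
  stmt9_general degD hbot hmul hadd hunit hdivision d A U H hrank hAd hUuni hHut hHdiag hHdeg hUA
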